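/- Let k ≥ 2, let P be a finite poset excluding k+k, with height h and maximum chain C = {c_1 < … < c_h}. Suppose z, w ∈ P − C satisfy dn(z) < up(w) and w ≤ z in P. Then every chain C′ contained in P − C with least element w and greatest element z has at most 4k−4 elements. -/

import Mathlib

/-!
Every point `x` of the chain satisfies `dn(x) ≤ dn(z) < up(w) ≤ up(x)`. Split it into the points
with `dn(x) + k < up(w)`, those with `dn(z) + k < up(x)`, and the rest. In either of the first two
parts there is a common `β` with `dn(x) ≤ β < β + k < up(x)` for all its points, which are
therefore incomparable to `c_{β+1}, …, c_{β+k}`; as `P` excludes `k + k`, each of these parts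
has fewer than `k` points. The remaining points have `up(w) - k ≤ dn(x)` and
`up(x) ≤ dn(z) + k`, so they can replace the elements `c_i` with `up(w) - k < i < dn(z) + k`
in `C`; since `C` is a maximum chain, there are at most `2k - 2` of them.
-/

variable {α : Type*}

/-- A linear extension of a partial order, given as a binary relation. -/
def IsLinExt [PartialOrder α] (r : α → α → Prop) : Prop :=
  IsLinearOrder α r ∧ ∀ x y : α, x ≤ y → r x y

/-- A realizer: a family of linear extensions whose intersection is the order. -/
def IsRealizer [PartialOrder α] {d : ℕ} (L : Fin d → α → α → Prop) : Prop :=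
  (∀ i, IsLinExt (L i)) ∧ ∀ x y : α, x ≤ y ↔ ∀ i, L i x y

/-- The order dimension of a poset: the least positive `d` admitting a realizer of size `d`. -/
noncomputable def pdim (α : Type*) [PartialOrder α] : ℕ :=
  sInf {d | 0 < d ∧ ∃ L : Fin d → α → α → Prop, IsRealizer L}

/-- The set of (ordered) incomparable pairs of a poset. -/
def IncPairs (α : Type*) [PartialOrder α] : Set (α × α) :=
  {p | ¬ p.1 ≤ p.2 ∧ ¬ p.2 ≤ p.1}

/-- `r` reverses every pair `(x, y)` in `S`, i.e. `x > y` in `r`. -/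
def Reverses [PartialOrder α] (r : α → α → Prop) (S : Set (α × α)) : Prop :=
  ∀ p ∈ S, r p.2 p.1 ∧ ¬ r p.1 p.2

/-- A set of incomparable pairs is reversible if some linear extension reverses all of them. -/
def Reversible [PartialOrder α] (S : Set (α × α)) : Prop :=
  ∃ r, IsLinExt r ∧ Reverses r S

/-- `d` linear extensions suffice to reverse every pair of `S` (i.e. `dim S ≤ d`). -/
def RealizerOn [PartialOrder α] (d : ℕ) (S : Set (α × α)) : Prop :=
  ∃ L : Fin d → α → α → Prop, (∀ i, IsLinExt (L i)) ∧
    ∀ p ∈ S, ∃ i, L i p.2 p.1 ∧ ¬ L i p.1 p.2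

/-- The height of a subset of a poset: the maximum size of a chain contained in it. -/
noncomputable def heightSet [PartialOrder α] (S : Set α) : ℕ :=
  sSup {n | ∃ t : Finset α, ↑t ⊆ S ∧ IsChain (· ≤ ·) (↑t : Set α) ∧ t.card = n}

/-- The height of a poset: the maximum size of a chain. -/
noncomputable def pheight (α : Type*) [PartialOrder α] : ℕ :=
  heightSet (Set.univ : Set α)

/-- The poset `k + k`: the disjoint sum of two `k`-element chains. -/
def TwoChains (k : ℕ) : Type := Fin k ⊕ Fin k

def TwoChains.le {k : ℕ} : TwoChains k → TwoChains k → Prop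
  | .inl i, .inl j => i.1 ≤ j.1
  | .inr i, .inr j => i.1 ≤ j.1
  | _, _ => False

theorem TwoChains.le_refl' {k : ℕ} (x : TwoChains k) : TwoChains.le x x := by
  cases x <;> simp [TwoChains.le]

theorem TwoChains.le_trans' {k : ℕ} (x y z : TwoChains k)
    (hxy : TwoChains.le x y) (hyz : TwoChains.le y z) : TwoChains.le x z := by
  cases x <;> cases y <;> cases z <;> simp_all [TwoChains.le] <;> omega

theorem TwoChains.le_antisymm' {k : ℕ} (x y : TwoChains k)
    (hxy : TwoChains.le x y) (hyx : TwoChains.le y x) : x = y := by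
  cases x <;> cases y <;> simp_all [TwoChains.le] <;>
    exact congrArg _ (le_antisymm hxy hyx)

instance (k : ℕ) : PartialOrder (TwoChains k) where
  le := TwoChains.le
  le_refl := TwoChains.le_refl'
  le_trans := TwoChains.le_trans'
  le_antisymm := TwoChains.le_antisymm'

/-- Given a chain `c : Fin h → α` (listing `c_1 < ⋯ < c_h`), `dnN c z` is the greatest
1-based index `i` with `c_i ≤ z`, and `0` if there is none. -/
noncomputable def dnN [PartialOrder α] {h : ℕ} (c : Fin h → α) (z : α) : ℕ :=
  {i : Fin h | c i ≤ z}.ncard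

/-- `upN c z` is the least 1-based index `j` with `z ≤ c_j`, and `h + 1` if there is none. -/
noncomputable def upN [PartialOrder α] {h : ℕ} (c : Fin h → α) (z : α) : ℕ :=
  h + 1 - {i : Fin h | z ≤ c i}.ncard

/-- A pair `(x, y)` is dangerous when `dn(x) < dn(y) < up(x) < up(y)`. -/
def Dangerous [PartialOrder α] {h : ℕ} (c : Fin h → α) (p : α × α) : Prop :=
  dnN c p.1 < dnN c p.2 ∧ dnN c p.2 < upN c p.1 ∧ upN c p.1 < upN c p.2

/-- `Dn(i)`: points outside the chain whose down-index is exactly `i`. -/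
def Dn [PartialOrder α] {h : ℕ} (c : Fin h → α) (i : ℕ) : Set α :=
  {z | z ∉ Set.range c ∧ dnN c z = i}

/-- `Ar(i, i+1)`: points outside the chain with `dn(z) ≤ i` and `up(z) ≥ i + 1`. -/
def Ar [PartialOrder α] {h : ℕ} (c : Fin h → α) (i : ℕ) : Set α :=
  {z | z ∉ Set.range c ∧ dnN c z ≤ i ∧ i + 1 ≤ upN c z}

lemma Fin.mem_iff_lt_ncard_of_isLowerSet {n : ℕ} {S : Set (Fin n)} (hS : IsLowerSet S)
    (i : Fin n) : i ∈ S ↔ (i : ℕ) < S.ncard := by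
  constructor
  · intro hi
    have := Set.ncard_le_ncard (hS.Iic_subset hi)
    rwa [← Finset.coe_Iic, Set.ncard_coe_finset, Fin.card_Iic, Nat.add_one_le_iff] at this
  · intro hlt
    by_contra hi
    have hsub : S ⊆ Set.Iio i := fun j hj => lt_of_not_ge fun hij => hi (hS hij hj)
    have := Set.ncard_le_ncard hsub
    rw [← Finset.coe_Iio, Set.ncard_coe_finset, Fin.card_Iio] at this
    omega

lemma Fin.mem_iff_sub_ncard_le_of_isUpperSet {n : ℕ} {S : Set (Fin n)} (hS : IsUpperSet S)
    (i : Fin n) : i ∈ S ↔ n - S.ncard ≤ (i : ℕ) := by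
  have hcompl := Fin.mem_iff_lt_ncard_of_isLowerSet hS.compl i
  rw [Set.ncard_compl, Nat.card_eq_fintype_card, Fintype.card_fin] at hcompl
  rw [← not_lt, ← hcompl, Set.mem_compl_iff, not_not]

section

variable [PartialOrder α] {h : ℕ} {c : Fin h → α}

lemma le_iff_lt_dnN (hc : Monotone c) (x : α) (i : Fin h) : c i ≤ x ↔ (i : ℕ) < dnN c x :=
  Fin.mem_iff_lt_ncard_of_isLowerSet (fun _ _ hji hi => (hc hji).trans hi) i

lemma le_iff_upN_le (hc : Monotone c) (x : α) (i : Fin h) :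
    x ≤ c i ↔ upN c x ≤ (i : ℕ) + 1 := by
  have hcard : {j : Fin h | x ≤ c j}.ncard ≤ h := by
    simpa using Set.ncard_le_ncard (Set.subset_univ {j : Fin h | x ≤ c j})
  refine (Fin.mem_iff_sub_ncard_le_of_isUpperSet (S := {j : Fin h | x ≤ c j})
    (fun _ _ hij hi => hi.trans (hc hij)) i).trans ?_
  rw [upN]
  omega

lemma dnN_mono (c : Fin h → α) : Monotone (dnN c) := fun _ _ hxy =>
  Set.ncard_le_ncard fun _ hi => le_trans hi hxy

lemma upN_mono (c : Fin h → α) : Monotone (upN c) := fun x y hxy => by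
  have : {i | y ≤ c i}.ncard ≤ {i | x ≤ c i}.ncard :=
    Set.ncard_le_ncard fun _ hi => hxy.trans hi
  unfold upN
  omega

lemma upN_le (c : Fin h → α) (x : α) : upN c x ≤ h + 1 := Nat.sub_le _ _

lemma IsChain.exists_fin_orderEmbedding {s : Finset α} (hs : IsChain (· ≤ ·) (s : Set α))
    {k : ℕ} (hk : k ≤ s.card) : ∃ a : Fin k ↪o α, ∀ i, a i ∈ s := by
  classical
  let := hs.linearOrder
  have hcard : Fintype.card (s : Set α) = s.card := by simp
  let e := (Fin.castLEOrderEmb hk).trans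
    ((monoEquivOfFin (s : Set α) hcard).toOrderEmbedding.trans (OrderEmbedding.subtype _))
  exact ⟨e, fun i => (monoEquivOfFin (s : Set α) hcard _).2⟩

lemma TwoChains.nonempty_orderEmbedding {k : ℕ} (a b : Fin k ↪o α)
    (hab : ∀ i j, IncompRel (· ≤ ·) (a i) (b j)) : Nonempty (TwoChains k ↪o α) := by
  refine ⟨OrderEmbedding.ofMapLEIff (Sum.elim a b) ?_⟩
  rintro (i | i) (j | j)
  · exact a.le_iff_le
  · exact iff_of_false (hab i j).1 id
  · exact iff_of_false (hab j i).2 id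
  · exact b.le_iff_le

lemma card_lt_of_forall_dnN_le_of_lt_upN (hc : StrictMono c) {k : ℕ}
    (hexc : ¬ Nonempty (TwoChains k ↪o α)) {s : Finset α}
    (hs : IsChain (· ≤ ·) (s : Set α)) (β : ℕ)
    (hβ : ∀ x ∈ s, dnN c x ≤ β ∧ β + k < upN c x) : s.card < k := by
  by_contra! hk
  obtain ⟨a, has⟩ := hs.exists_fin_orderEmbedding hk
  have hlt (i : Fin k) : β + i < h := by
    have := hβ _ (has i)
    have := upN_le c (a i)
    omega
  let b : Fin k ↪o α := OrderEmbedding.ofStrictMono (fun j => c ⟨β + j, hlt j⟩)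
    fun i j hij => hc (Fin.mk_lt_mk.mpr (by simpa using hij))
  refine hexc (TwoChains.nonempty_orderEmbedding a b fun i j => ⟨?_, ?_⟩) <;>
    have := hβ _ (has i) <;> have := j.2
  · change ¬ a i ≤ c _
    rw [le_iff_upN_le hc.monotone, Fin.val_mk]
    omega
  · change ¬ c _ ≤ a i
    rw [le_iff_lt_dnN hc.monotone, Fin.val_mk]
    omega

lemma card_le_of_le_dnN_of_upN_le (hc : StrictMono c)
    (hmax : ∀ T : Finset α, IsChain (· ≤ ·) (T : Set α) → T.card ≤ h)
    {s : Finset α} (hs : IsChain (· ≤ ·) (s : Set α)) (hsc : ∀ x ∈ s, x ∉ Set.range c)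
    (m M : ℕ) (hmM : ∀ x ∈ s, m ≤ dnN c x ∧ upN c x ≤ M) : s.card ≤ M - (m + 1) := by
  classical
  set I := Finset.univ.filter fun i : Fin h => (i : ℕ) < m ∨ M ≤ i + 1
  have hcomp : ∀ x ∈ s, ∀ i ∈ I, c i ≤ x ∨ x ≤ c i := by
    intro x hx i hi
    have := hmM x hx
    rw [le_iff_lt_dnN hc.monotone, le_iff_upN_le hc.monotone]
    simp only [I, Finset.mem_filter, Finset.mem_univ, true_and] at hi
    omega
  have hchain : IsChain (· ≤ ·) ((s ∪ I.image c : Finset α) : Set α) := by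
    rw [Finset.coe_union, isChain_union]
    refine ⟨hs, hc.monotone.isChain_range.mono (by simp), ?_⟩
    intro x hx y hy _
    obtain ⟨i, hi, rfl⟩ := Finset.mem_image.mp hy
    exact (hcomp x hx i hi).symm
  have hdisj : Disjoint s (I.image c) := Finset.disjoint_right.mpr fun y hy hys => by
    obtain ⟨i, -, rfl⟩ := Finset.mem_image.mp hy
    exact hsc _ hys ⟨i, rfl⟩
  have hgap : Iᶜ.card ≤ M - (m + 1) := by
    refine (Finset.card_le_card_of_injOn Fin.val (t := Finset.Ico m (M - 1)) ?_
      Fin.val_injective.injOn).trans (by simp; omega)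
    intro i hi
    simp only [I, Finset.coe_compl, Finset.coe_filter, Finset.mem_univ, true_and,
      Set.mem_compl_iff, Set.mem_ofPred_eq] at hi
    simp only [Finset.coe_Ico, Set.mem_Ico]
    omega
  have := hmax _ hchain
  rw [Finset.card_union_of_disjoint hdisj, Finset.card_image_of_injective _ hc.injective] at this
  rw [Finset.card_compl, Fintype.card_fin] at hgap
  omega

lemma card_le_pheight [Fintype α] {T : Finset α} (hT : IsChain (· ≤ ·) (T : Set α)) :
    T.card ≤ pheight α := by
  refine le_csSup ⟨Fintype.card α, ?_⟩ ⟨T, Set.subset_univ _, hT, rfl⟩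
  rintro n ⟨t, -, -, rfl⟩
  exact Finset.card_le_univ t

end

theorem chain_between_card_le_general {α : Type*} [PartialOrder α] [Fintype α] (k : ℕ)
    (hexc : ¬ Nonempty (TwoChains k ↪o α))
    (c : Fin (pheight α) → α) (hc : StrictMono c)
    (z w : α)
    (hdu : dnN c z < upN c w)
    (t : Finset α) (htC : ∀ x ∈ t, x ∉ Set.range c)
    (htchain : IsChain (· ≤ ·) (↑t : Set α))
    (hbound : ∀ x ∈ t, w ≤ x ∧ x ≤ z) :
    t.card ≤ 4 * k - 4 := by
  classical
  have hdn (x) (hx : x ∈ t) : dnN c x ≤ dnN c z := dnN_mono c (hbound x hx).2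
  have hup (x) (hx : x ∈ t) : upN c w ≤ upN c x := upN_mono c (hbound x hx).1
  set low := t.filter fun x => dnN c x + k < upN c w
  set rest := t.filter fun x => ¬ dnN c x + k < upN c w
  set high := rest.filter fun x => dnN c z + k < upN c x
  set mid := rest.filter fun x => ¬ dnN c z + k < upN c x
  have hrest : rest ⊆ t := Finset.filter_subset _ _
  have hlow : low.card < k :=
    card_lt_of_forall_dnN_le_of_lt_upN hc hexc
      (htchain.mono (Finset.coe_subset.mpr (Finset.filter_subset _ _))) (upN c w - k - 1)
      fun x hx => by
        simp only [low, Finset.mem_filter] at hx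
        have := hup x hx.1
        omega
  have hhigh : high.card < k :=
    card_lt_of_forall_dnN_le_of_lt_upN hc hexc
      (htchain.mono (Finset.coe_subset.mpr ((Finset.filter_subset _ _).trans hrest))) (dnN c z)
      fun x hx => by
        simp only [high, Finset.mem_filter] at hx
        exact ⟨hdn x (hrest hx.1), hx.2⟩
  have hmid : mid.card ≤ dnN c z + k - (upN c w - k + 1) := by
    have hmt : mid ⊆ t := (Finset.filter_subset _ _).trans hrest
    refine card_le_of_le_dnN_of_upN_le hc (fun _ => card_le_pheight)
      (htchain.mono (Finset.coe_subset.mpr hmt)) (fun x hx => htC x (hmt hx))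
      (upN c w - k) (dnN c z + k) fun x hx => ?_
    simp only [mid, rest, Finset.mem_filter] at hx
    omega
  have hsplit : low.card + rest.card = t.card := Finset.card_filter_add_card_filter_not _
  have hsplit' : high.card + mid.card = rest.card := Finset.card_filter_add_card_filter_not _
  omega

/-- If `P` excludes `k + k`, `C` is a maximum chain, `z, w ∉ C`, `dn(z) < up(w)` and
`w ≤ z`, then every chain in `P − C` with least element `w` and greatest element `z`
has at most `4k − 4` elements. -/
theorem chain_between_card_le {α : Type*} [PartialOrder α] [Fintype α] (k : ℕ) (hk : 2 ≤ k)
    (hexc : ¬ Nonempty (TwoChains k ↪o α))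
    (c : Fin (pheight α) → α) (hc : StrictMono c)
    (z w : α) (hz : z ∉ Set.range c) (hw : w ∉ Set.range c)
    (hdu : dnN c z < upN c w) (hwz : w ≤ z)
    (t : Finset α) (htC : ∀ x ∈ t, x ∉ Set.range c)
    (htchain : IsChain (· ≤ ·) (↑t : Set α))
    (hwt : w ∈ t) (hzt : z ∈ t) (hbound : ∀ x ∈ t, w ≤ x ∧ x ≤ z) :
    t.card ≤ 4 * k - 4 :=
  chain_between_card_le_general k hexc c hc z w hdu t htC htchain hbound
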